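/- Let (r,v) : I → H² × dS² be a spacelike Legendre curve with spacelike hyperbolic Legendre curvature (ℓ,m), with r(I) ⊂ H²₊, and let Q ∈ H²₊. Then the derivative of the hyperbolic orthotomic satisfies d/ds Ort_Q(r)(s) = −2m(s)·(⟨Q,μ(s)⟩v(s) + ⟨Q,v(s)⟩μ(s)), and consequently Ort_Q(r) has a singular point at s₀ ∈ I (i.e., d/ds Ort_Q(r)(s₀) = 0) if and only if m(s₀) = 0 or Q = r(s₀). -/

import Mathlib

noncomputable section

/-- The Minkowski pseudo scalar product on `ℝ³₁`. -/
def mdot (u w : Fin 3 → ℝ) : ℝ := -(u 0 * w 0) + u 1 * w 1 + u 2 * w 2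

/-- The Minkowski pseudo vector product on `ℝ³₁`. -/
def mcross (u w : Fin 3 → ℝ) : Fin 3 → ℝ :=
  ![-(u 1 * w 2) + u 2 * w 1, u 2 * w 0 - u 0 * w 2, -(u 1 * w 0) + u 0 * w 1]

/-- Hyperbolic 2-space. -/
def H2 : Set (Fin 3 → ℝ) := {u | mdot u u = -1}

/-- Upper branch of hyperbolic 2-space. -/
def H2plus : Set (Fin 3 → ℝ) := {u | mdot u u = -1 ∧ 0 < u 0}

/-- de Sitter 2-space. -/
def dS2 : Set (Fin 3 → ℝ) := {u | mdot u u = 1}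

/-- A spacelike Legendre curve `(r, v)` on the open interval `I`. -/
def IsSLegendre (I : Set ℝ) (r v : ℝ → Fin 3 → ℝ) : Prop :=
  ContDiffOn ℝ (⊤ : ℕ∞) r I ∧ ContDiffOn ℝ (⊤ : ℕ∞) v I ∧
  (∀ s ∈ I, r s ∈ H2) ∧ (∀ s ∈ I, v s ∈ dS2) ∧
  (∀ s ∈ I, mdot (r s) (v s) = 0) ∧ (∀ s ∈ I, mdot (deriv r s) (v s) = 0)

/-- `μ = r ∧ v`. -/
def muc (r v : ℝ → Fin 3 → ℝ) : ℝ → Fin 3 → ℝ := fun s => mcross (r s) (v s)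

/-- First Legendre curvature `ℓ = ⟨r', μ⟩`. -/
def ellc (r v : ℝ → Fin 3 → ℝ) : ℝ → ℝ := fun s => mdot (deriv r s) (muc r v s)

/-- Second Legendre curvature `m = ⟨v', μ⟩`. -/
def mc (r v : ℝ → Fin 3 → ℝ) : ℝ → ℝ := fun s => mdot (deriv v s) (muc r v s)

/-- Hyperbolic pedal curve relative to `Q` of a frontal with dual curve `v`. -/
def Ped (Q : Fin 3 → ℝ) (v : ℝ → Fin 3 → ℝ) (s : ℝ) : Fin 3 → ℝ :=
  (Real.sqrt (1 + (mdot Q (v s)) ^ 2))⁻¹ • (Q - mdot Q (v s) • v s)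

/-- Hyperbolic orthotomic curve relative to `Q` of a frontal with dual curve `v`. -/
def Ort (Q : Fin 3 → ℝ) (v : ℝ → Fin 3 → ℝ) (s : ℝ) : Fin 3 → ℝ :=
  Q - (2 * mdot Q (v s)) • v s

/-- The standard global chart of `H²₊`. -/
def qchart (x : Fin 3 → ℝ) : ℝ × ℝ := (x 1, x 2)

/-- `f` has an `A_{k-1}`-type singularity at `s₀` (for `k = 0` this means `f s₀ ≠ 0`,
i.e. an `A_{-1}`-type singularity). -/
def AkSingPred (f : ℝ → ℝ) (k : ℕ) (s₀ : ℝ) : Prop :=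
  (∀ i < k, iteratedDeriv i f s₀ = 0) ∧ iteratedDeriv k f s₀ ≠ 0

/-- `ψ` is a germ of a `C^n` diffeomorphism at `x`. -/
def IsLocalCnDiffeoAt (n : ℕ∞) {E F : Type*} [NormedAddCommGroup E] [NormedSpace ℝ E]
    [NormedAddCommGroup F] [NormedSpace ℝ F] (ψ : E → F) (x : E) : Prop :=
  ∃ (U : Set E) (V : Set F) (ψinv : F → E), IsOpen U ∧ x ∈ U ∧ IsOpen V ∧ ψ x ∈ V ∧
    ContDiffOn ℝ n ψ U ∧ ContDiffOn ℝ n ψinv V ∧ Set.MapsTo ψ U V ∧ Set.MapsTo ψinv V U ∧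
    (∀ y ∈ U, ψinv (ψ y) = y) ∧ (∀ z ∈ V, ψ (ψinv z) = z)

/-- The plane curve germ of `f` at `s₀` is `C^n` `𝒜`-equivalent to the germ of `g` at `t₀`. -/
def CnAEquiv (n : ℕ∞) (f : ℝ → ℝ × ℝ) (s₀ : ℝ) (g : ℝ → ℝ × ℝ) (t₀ : ℝ) : Prop :=
  ∃ (φ : ℝ → ℝ) (Ψ : ℝ × ℝ → ℝ × ℝ),
    IsLocalCnDiffeoAt n φ s₀ ∧ φ s₀ = t₀ ∧
    IsLocalCnDiffeoAt n Ψ (f s₀) ∧ Ψ (f s₀) = g t₀ ∧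
    ∀ᶠ s in nhds s₀, g (φ s) = Ψ (f s)

/-- The plane curve germ of `f` at `s₀` is `C^n` `ℒ`-equivalent to the germ of `g` at `s₀`. -/
def CnLEquiv (n : ℕ∞) (f : ℝ → ℝ × ℝ) (s₀ : ℝ) (g : ℝ → ℝ × ℝ) : Prop :=
  ∃ Ψ : ℝ × ℝ → ℝ × ℝ,
    IsLocalCnDiffeoAt n Ψ (f s₀) ∧ Ψ (f s₀) = g s₀ ∧
    ∀ᶠ s in nhds s₀, g s = Ψ (f s)

end

lemma mdot_comm (u w : Fin 3 → ℝ) : mdot u w = mdot w u := by simp [mdot]; ring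

lemma mcross_triple (a b c : Fin 3 → ℝ) :
    mcross a (mcross b c) = mdot a b • c - mdot a c • b := by
  funext i; fin_cases i <;> simp [mcross, mdot] <;> ring

lemma mdot_mcross_left (a b : Fin 3 → ℝ) : mdot a (mcross a b) = 0 := by
  simp [mdot, mcross]; ring

lemma mdot_mcross_right (a b : Fin 3 → ℝ) : mdot b (mcross a b) = 0 := by
  simp [mdot, mcross]; ring

lemma mdot_lagrange (a b : Fin 3 → ℝ) :
    mdot (mcross a b) (mcross a b) = mdot a b ^ 2 - mdot a a * mdot b b := by
  simp [mdot, mcross]; ring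

lemma mdot_add_smul (a b : ℝ) (x y z : Fin 3 → ℝ) :
    mdot (a • x + b • y) z = a * mdot x z + b * mdot y z := by
  simp [mdot]; ring

lemma mdot_zero_left (z : Fin 3 → ℝ) : mdot 0 z = 0 := by simp [mdot]

lemma mdot_smul_right (c : ℝ) (x y : Fin 3 → ℝ) : mdot x (c • y) = c * mdot x y := by
  simp [mdot]; ring

lemma mdot_smul_smul (c : ℝ) (x : Fin 3 → ℝ) : mdot (c • x) (c • x) = c ^ 2 * mdot x x := by
  simp [mdot]; ring

lemma perp_span (r v w : Fin 3 → ℝ) (h1 : mdot r r = -1) (h2 : mdot v v = 1)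
    (h3 : mdot r v = 0) (h4 : mdot w r = 0) (h5 : mdot w v = 0) :
    w = mdot w (mcross r v) • mcross r v := by
  have hmu : mdot (mcross r v) (mcross r v) = 1 := by
    rw [mdot_lagrange, h1, h2, h3]; ring
  have h0 : mcross w (mcross r v) = 0 := by
    rw [mcross_triple, h4, h5]; simp
  have h6 : mcross (mcross r v) (mcross w (mcross r v)) = 0 := by
    rw [h0]; funext i; fin_cases i <;> simp [mcross]
  rw [mcross_triple, hmu, mdot_comm (mcross r v) w] at h6
  have := sub_eq_zero.mp h6
  rw [one_smul] at this
  exact this.symm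

lemma Q_colinear (r v Q : Fin 3 → ℝ) (h1 : mdot r r = -1) (h2 : mdot v v = 1)
    (h3 : mdot r v = 0) (hv : mdot Q v = 0) (hmu : mdot Q (mcross r v) = 0) :
    Q = (-(mdot Q r)) • r := by
  have hnu : mcross v (mcross r v) = -r := by
    rw [mcross_triple, mdot_comm v r, h3, h2]; simp
  have h0 : mcross Q (mcross v (mcross r v)) = 0 := by
    rw [mcross_triple, hv, hmu]; simp
  rw [hnu] at h0
  have hQr : mcross Q r = 0 := by
    have hneg : mcross Q (-r) = -(mcross Q r) := by
      funext i; fin_cases i <;> simp [mcross] <;> ring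
    rw [hneg, neg_eq_zero] at h0; exact h0
  have h7 : mcross r (mcross Q r) = 0 := by
    rw [hQr]; funext i; fin_cases i <;> simp [mcross]
  rw [mcross_triple, h1] at h7
  have := sub_eq_zero.mp h7
  rw [mdot_comm r Q] at this
  funext i
  have := congrFun this i
  simp only [Pi.smul_apply, smul_eq_mul, Pi.neg_apply] at this ⊢
  linarith

lemma hasDerivAt_mdot {f g : ℝ → Fin 3 → ℝ} {f' g' : Fin 3 → ℝ} {s : ℝ}
    (hf : HasDerivAt f f' s) (hg : HasDerivAt g g' s) :
    HasDerivAt (fun t => mdot (f t) (g t)) (mdot f' (g s) + mdot (f s) g') s := by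
  have hf0 := hasDerivAt_pi.mp hf 0
  have hf1 := hasDerivAt_pi.mp hf 1
  have hf2 := hasDerivAt_pi.mp hf 2
  have hg0 := hasDerivAt_pi.mp hg 0
  have hg1 := hasDerivAt_pi.mp hg 1
  have hg2 := hasDerivAt_pi.mp hg 2
  have H := ((hf0.mul hg0).neg.add (hf1.mul hg1)).add (hf2.mul hg2)
  convert H using 1
  · rfl
  · rfl
  · funext t; simp [mdot]
  · simp [mdot]; ring

/-- the derivative formula for the hyperbolic orthotomic, and the
characterization of its singular points: `Ort_Q(r)` is singular at `s₀` iff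
`m s₀ = 0` or `Q = r s₀`. -/
theorem orthotomic_deriv_formula_and_singularities
    (I : Set ℝ) (hI : IsOpen I) (r v : ℝ → Fin 3 → ℝ) (Q : Fin 3 → ℝ)
    (h : IsSLegendre I r v) (hrp : ∀ s ∈ I, r s ∈ H2plus) (hQ : Q ∈ H2plus) :
    (∀ s ∈ I, deriv (Ort Q v) s =
      (-(2 * mc r v s)) • (mdot Q (muc r v s) • v s + mdot Q (v s) • muc r v s)) ∧
    (∀ s₀ ∈ I, (deriv (Ort Q v) s₀ = 0 ↔ mc r v s₀ = 0 ∨ Q = r s₀)) := by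
  obtain ⟨hr, hv, hrH, hvS, hrv, hr'v⟩ := h
  have key : ∀ s ∈ I, deriv (Ort Q v) s =
      (-(2 * mc r v s)) • (mdot Q (muc r v s) • v s + mdot Q (v s) • muc r v s) := by
    intro s hs
    have hvd : DifferentiableAt ℝ v s := (hv.contDiffAt (hI.mem_nhds hs)).differentiableAt (by simp)
    have hrd : DifferentiableAt ℝ r s := (hr.contDiffAt (hI.mem_nhds hs)).differentiableAt (by simp)
    have hv' := hvd.hasDerivAt
    have hr' := hrd.hasDerivAt
    have e1 : (fun t => mdot (v t) (v t)) =ᶠ[nhds s] (fun _ => (1:ℝ)) :=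
      Filter.eventuallyEq_of_mem (hI.mem_nhds hs) (fun t ht => hvS t ht)
    have A1 := hasDerivAt_mdot hv' hv'
    have A1' : HasDerivAt (fun t => mdot (v t) (v t)) 0 s :=
      (hasDerivAt_const s (1:ℝ)).congr_of_eventuallyEq e1
    have d1 : mdot (deriv v s) (v s) + mdot (v s) (deriv v s) = 0 := A1.unique A1'
    have h5 : mdot (deriv v s) (v s) = 0 := by
      rw [mdot_comm (v s)] at d1; linarith
    have e2 : (fun t => mdot (r t) (v t)) =ᶠ[nhds s] (fun _ => (0:ℝ)) :=
      Filter.eventuallyEq_of_mem (hI.mem_nhds hs) (fun t ht => hrv t ht)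
    have A2 := hasDerivAt_mdot hr' hv'
    have A2' : HasDerivAt (fun t => mdot (r t) (v t)) 0 s :=
      (hasDerivAt_const s (0:ℝ)).congr_of_eventuallyEq e2
    have d2 : mdot (deriv r s) (v s) + mdot (r s) (deriv v s) = 0 := A2.unique A2'
    have h4 : mdot (deriv v s) (r s) = 0 := by
      have h6 := hr'v s hs
      rw [mdot_comm]
      linarith
    have keyv : deriv v s = mc r v s • muc r v s := by
      have := perp_span (r s) (v s) (deriv v s) (hrp s hs).1 (hvS s hs) (hrv s hs) h4 h5
      simpa [mc, muc] using this
    have hg : HasDerivAt (fun t => mdot Q (v t)) (mdot Q (deriv v s)) s := by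
      have := hasDerivAt_mdot (hasDerivAt_const s Q) hv'
      simpa [mdot_zero_left] using this
    have hsm : HasDerivAt (fun t => (2 * mdot Q (v t)) • v t)
        ((2 * mdot Q (v s)) • deriv v s + (2 * mdot Q (deriv v s)) • v s) s :=
      (hg.const_mul 2).smul hv'
    have hOrt : HasDerivAt (Ort Q v)
        (-((2 * mdot Q (v s)) • deriv v s + (2 * mdot Q (deriv v s)) • v s)) s :=
      hsm.const_sub Q
    rw [hOrt.deriv, keyv, mdot_smul_right]
    funext i
    simp only [Pi.smul_apply, Pi.add_apply, Pi.neg_apply, smul_eq_mul]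
    ring
  refine ⟨key, fun s₀ hs₀ => ?_⟩
  rw [key s₀ hs₀]
  constructor
  · intro h0
    rcases smul_eq_zero.mp h0 with hc | hW
    · left; linarith
    · right
      have hmu1 : mdot (muc r v s₀) (muc r v s₀) = 1 := by
        simp only [muc]
        rw [mdot_lagrange, (hrp s₀ hs₀).1, hvS s₀ hs₀, hrv s₀ hs₀]; ring
      have hvm : mdot (muc r v s₀) (v s₀) = 0 := by
        rw [mdot_comm]; simp only [muc]; exact mdot_mcross_right _ _
      have hvm' : mdot (v s₀) (muc r v s₀) = 0 := by rw [mdot_comm]; exact hvm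
      have hvv : mdot (v s₀) (v s₀) = 1 := hvS s₀ hs₀
      have ha : mdot Q (muc r v s₀) = 0 := by
        have h1 := congrArg (fun w => mdot w (v s₀)) hW
        simp only [mdot_add_smul, mdot_zero_left, hvv, hvm] at h1
        linarith
      have hb : mdot Q (v s₀) = 0 := by
        have h1 := congrArg (fun w => mdot w (muc r v s₀)) hW
        simp only [mdot_add_smul, mdot_zero_left, hmu1, hvm'] at h1
        linarith
      have hQcol : Q = (-(mdot Q (r s₀))) • r s₀ :=
        Q_colinear (r s₀) (v s₀) Q (hrp s₀ hs₀).1 (hvS s₀ hs₀) (hrv s₀ hs₀) hb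
          (by simpa [muc] using ha)
      have hc2 : (-(mdot Q (r s₀))) ^ 2 = 1 := by
        have hQQ : mdot Q Q = -1 := hQ.1
        nth_rewrite 1 [hQcol] at hQQ
        nth_rewrite 2 [hQcol] at hQQ
        rw [mdot_smul_smul, (hrp s₀ hs₀).1] at hQQ
        linarith
      have hcpos : 0 < -(mdot Q (r s₀)) := by
        have h0Q : Q 0 = (-(mdot Q (r s₀))) * r s₀ 0 := by
          conv_lhs => rw [hQcol]
          simp
        have hq2 := hQ.2
        have hr2 := (hrp s₀ hs₀).2
        nlinarith
      have hc1 : -(mdot Q (r s₀)) = 1 := by nlinarith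
      rw [hQcol, hc1, one_smul]
  · rintro (hm | hQr)
    · rw [hm]; simp
    · have ha : mdot Q (muc r v s₀) = 0 := by
        rw [hQr]; simp only [muc]; exact mdot_mcross_left _ _
      have hb : mdot Q (v s₀) = 0 := by rw [hQr]; exact hrv s₀ hs₀
      rw [ha, hb]; simp
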